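/- Let T be a braided self-adjoint contraction on H ⊗ H (H finite-dimensional). If X ∈ ker P_n, then for every i the element e_i* ⊗ X, rewritten via the Wick relations, lies in ker P_{n-1} + ker P_n ⊗ H*; concretely, μ(e_i*)R_n X ∈ ker P_{n-1} and μ(e_i*)T_1T_2⋯T_n(X ⊗ e_k) ∈ ker P_n for each k, where μ(e_i*) is the annihilation operator. -/

import Mathlib

/-!
The first claim is immediate: `μ(e_i*) (1 ⊗ A) = A μ(e_i*)`, so
`P_{n-1} μ(e_i*) R_n X = μ(e_i*) (1 ⊗ P_{n-1}) R_n X = μ(e_i*) P_n X = 0`.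

The second rests on `(1 ⊗ P_n) T_1 ⋯ T_n = T_1 ⋯ T_n (P_n ⊗ 1)`, which gives
`P_n μ(e_i*) T_1 ⋯ T_n (X ⊗ e_k) = μ(e_i*) T_1 ⋯ T_n (P_n X ⊗ e_k) = 0`.
The braid relation yields `T_{i+1} (T_1 ⋯ T_n) = (T_1 ⋯ T_n) T_i` for `i < n`, hence
`(1 ⊗ T_1 ⋯ T_k) T_1 ⋯ T_n = T_1 ⋯ T_n (T_1 ⋯ T_k ⊗ 1)` for `k < n`. Summing over `k` gives
the relation for `R_n`, and induction on `n` through `P_{n+1} = (1 ⊗ P_n) R_{n+1}` the one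
for `P_n`.
-/

open scoped ComplexOrder

namespace Wick

/-- The operator `T_i = 1^{⊗(i-1)} ⊗ T ⊗ 1^{⊗(n-i-1)}` on `H^{⊗n}` (1-indexed, acting on
tensor factors `i` and `i+1`), where `H = ℂ^d` and `H^{⊗n}` is identified with
functions `(Fin n → Fin d) → ℂ` via the basis of elementary tensors. -/
noncomputable def Ti (d n : ℕ) (T : Matrix (Fin d × Fin d) (Fin d × Fin d) ℂ) (i : ℕ) :
    Matrix (Fin n → Fin d) (Fin n → Fin d) ℂ :=
  if h : 1 ≤ i ∧ i < n then
    fun w w' =>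
      T (w ⟨i - 1, by omega⟩, w ⟨i, h.2⟩) (w' ⟨i - 1, by omega⟩, w' ⟨i, h.2⟩) *
        ∏ j : Fin n, if (j : ℕ) = i - 1 ∨ (j : ℕ) = i then 1 else (if w j = w' j then 1 else 0)
  else 1

/-- The product `T_1 T_2 ⋯ T_k` on `H^{⊗n}`. -/
noncomputable def prodT (d n : ℕ) (T : Matrix (Fin d × Fin d) (Fin d × Fin d) ℂ) (k : ℕ) :
    Matrix (Fin n → Fin d) (Fin n → Fin d) ℂ :=
  ((List.range k).map (fun j => Ti d n T (j + 1))).prod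

/-- The reversed product `T_k T_{k-1} ⋯ T_1` on `H^{⊗n}`. -/
noncomputable def prodTrev (d n : ℕ) (T : Matrix (Fin d × Fin d) (Fin d × Fin d) ℂ) (k : ℕ) :
    Matrix (Fin n → Fin d) (Fin n → Fin d) ℂ :=
  ((List.range k).map (fun j => Ti d n T (k - j))).prod

/-- `R_n = 1 + T_1 + T_1 T_2 + ⋯ + T_1 T_2 ⋯ T_{n-1}` on `H^{⊗n}`. -/
noncomputable def Rmat (d n : ℕ) (T : Matrix (Fin d × Fin d) (Fin d × Fin d) ℂ) :
    Matrix (Fin n → Fin d) (Fin n → Fin d) ℂ :=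
  ∑ k ∈ Finset.range n, prodT d n T k

/-- `1 ⊗ A` on `H^{⊗(n+1)}`, for `A` an operator on `H^{⊗n}`. -/
noncomputable def oneTensor (d n : ℕ) (A : Matrix (Fin n → Fin d) (Fin n → Fin d) ℂ) :
    Matrix (Fin (n + 1) → Fin d) (Fin (n + 1) → Fin d) ℂ :=
  fun w w' => (if w 0 = w' 0 then 1 else 0) * A (fun j => w j.succ) (fun j => w' j.succ)

/-- `A ⊗ 1` on `H^{⊗(n+1)}`, for `A` an operator on `H^{⊗n}`. -/
noncomputable def tensorOne (d n : ℕ) (A : Matrix (Fin n → Fin d) (Fin n → Fin d) ℂ) :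
    Matrix (Fin (n + 1) → Fin d) (Fin (n + 1) → Fin d) ℂ :=
  fun w w' =>
    A (fun j => w j.castSucc) (fun j => w' j.castSucc) *
      (if w (Fin.last n) = w' (Fin.last n) then 1 else 0)

/-- The operators `P_n` on `H^{⊗n}`: `P_1 = 1`, `P_{n+1} = (1 ⊗ P_n) R_{n+1}`
(so `P_2 = R_2 = 1 + T`). -/
noncomputable def Pmat (d : ℕ) (T : Matrix (Fin d × Fin d) (Fin d × Fin d) ℂ) :
    (n : ℕ) → Matrix (Fin n → Fin d) (Fin n → Fin d) ℂ
  | 0 => 1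
  | n + 1 => oneTensor d n (Pmat d T n) * Rmat d (n + 1) T

/-- `U_n = (T_1 ⋯ T_n)(T_1 ⋯ T_{n-1}) ⋯ (T_1 T_2) T_1` on `H^{⊗m}`. -/
noncomputable def Umat (d m : ℕ) (T : Matrix (Fin d × Fin d) (Fin d × Fin d) ℂ) (n : ℕ) :
    Matrix (Fin m → Fin d) (Fin m → Fin d) ℂ :=
  ((List.range n).map (fun j => prodT d m T (n - j))).prod

/-- The braid condition `T_1 T_2 T_1 = T_2 T_1 T_2` on `H^{⊗3}`. -/
def Braided (d : ℕ) (T : Matrix (Fin d × Fin d) (Fin d × Fin d) ℂ) : Prop :=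
  Ti d 3 T 1 * Ti d 3 T 2 * Ti d 3 T 1 = Ti d 3 T 2 * Ti d 3 T 1 * Ti d 3 T 2

/-- Elementary tensor `X ⊗ Y ∈ H^{⊗(n+m)}`. -/
noncomputable def tensorVec {d n m : ℕ} (X : (Fin n → Fin d) → ℂ) (Y : (Fin m → Fin d) → ℂ) :
    (Fin (n + m) → Fin d) → ℂ :=
  fun u => X (fun i => u (Fin.castAdd m i)) * Y (fun j => u (Fin.natAdd n j))

/-- The annihilation operator `μ(e_i*) : H^{⊗(m+1)} → H^{⊗m}`,
`e_{i_1} ⊗ ⋯ ⊗ e_{i_{m+1}} ↦ δ_{i,i_1} e_{i_2} ⊗ ⋯ ⊗ e_{i_{m+1}}`. -/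
noncomputable def ann {d m : ℕ} (i : Fin d) (v : (Fin (m + 1) → Fin d) → ℂ) :
    (Fin m → Fin d) → ℂ :=
  fun u => v (Fin.cons i u)

/-- The basis vector `e_k ∈ H`. -/
noncomputable def basisVec {d : ℕ} (k : Fin d) : (Fin 1 → Fin d) → ℂ :=
  fun u => if u 0 = k then 1 else 0
open Matrix
open scoped Kronecker

section Kronecker

variable {R ι κ μ : Type*} [CommRing R] [Fintype ι] [DecidableEq ι] [Fintype κ] [DecidableEq κ]
  [Fintype μ] [DecidableEq μ]

def oneKroneckerHom (e : ι ≃ κ × μ) : Matrix μ μ R →+* Matrix ι ι R where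
  toFun A := ((1 : Matrix κ κ R) ⊗ₖ A).submatrix e e
  map_one' := by rw [one_kronecker_one, submatrix_one_equiv]
  map_mul' A B := by rw [submatrix_mul_equiv, ← mul_kronecker_mul, mul_one]
  map_zero' := by simp
  map_add' A B := by rw [kronecker_add, submatrix_add]; rfl

end Kronecker

variable {d n : ℕ} (T : Matrix (Fin d × Fin d) (Fin d × Fin d) ℂ)

lemma oneTensor_eq_oneKroneckerHom :
    oneTensor d n = oneKroneckerHom (Fin.consEquiv fun _ => Fin d).symm := by
  ext A w w'
  simp [oneTensor, oneKroneckerHom, one_apply]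
  rfl

lemma tensorOne_eq_oneKroneckerHom :
    tensorOne d n = oneKroneckerHom (Fin.snocEquiv fun _ => Fin d).symm := by
  ext A w w'
  simp [tensorOne, oneKroneckerHom, one_apply]
  rfl

lemma oneTensor_one : oneTensor d n 1 = 1 := by
  rw [oneTensor_eq_oneKroneckerHom, map_one]

lemma oneTensor_mul (A B : Matrix (Fin n → Fin d) (Fin n → Fin d) ℂ) :
    oneTensor d n (A * B) = oneTensor d n A * oneTensor d n B := by
  rw [oneTensor_eq_oneKroneckerHom, map_mul]

lemma oneTensor_sum {ι : Type*} (s : Finset ι)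
    (f : ι → Matrix (Fin n → Fin d) (Fin n → Fin d) ℂ) :
    oneTensor d n (∑ k ∈ s, f k) = ∑ k ∈ s, oneTensor d n (f k) := by
  rw [oneTensor_eq_oneKroneckerHom, map_sum]

lemma commute_oneTensor {A B : Matrix (Fin n → Fin d) (Fin n → Fin d) ℂ} (h : Commute A B) :
    Commute (oneTensor d n A) (oneTensor d n B) := by
  rw [oneTensor_eq_oneKroneckerHom]
  exact h.map _

lemma tensorOne_one : tensorOne d n 1 = 1 := by
  rw [tensorOne_eq_oneKroneckerHom, map_one]

lemma tensorOne_mul (A B : Matrix (Fin n → Fin d) (Fin n → Fin d) ℂ) :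
    tensorOne d n (A * B) = tensorOne d n A * tensorOne d n B := by
  rw [tensorOne_eq_oneKroneckerHom, map_mul]

lemma tensorOne_sum {ι : Type*} (s : Finset ι)
    (f : ι → Matrix (Fin n → Fin d) (Fin n → Fin d) ℂ) :
    tensorOne d n (∑ k ∈ s, f k) = ∑ k ∈ s, tensorOne d n (f k) := by
  rw [tensorOne_eq_oneKroneckerHom, map_sum]

lemma oneTensor_tensorOne (A : Matrix (Fin n → Fin d) (Fin n → Fin d) ℂ) :
    oneTensor d (n + 1) (tensorOne d n A) = tensorOne d (n + 1) (oneTensor d n A) := by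
  ext w w'
  simp only [oneTensor, tensorOne, Fin.succ_castSucc, Fin.succ_last, Fin.castSucc_zero]
  exact (mul_assoc _ _ _).symm

lemma ann_oneTensor_mulVec (A : Matrix (Fin n → Fin d) (Fin n → Fin d) ℂ)
    (v : (Fin (n + 1) → Fin d) → ℂ) (i : Fin d) :
    ann i (oneTensor d n A *ᵥ v) = A *ᵥ ann i v := by
  funext u
  simp only [ann, mulVec, dotProduct]
  rw [← (Fin.consEquiv fun _ => Fin d).sum_comp, Fintype.sum_prod_type, Finset.sum_eq_single i]
  · simp [oneTensor, Fin.consEquiv]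
  · intro b _ hb
    simp [oneTensor, Ne.symm hb]
  · simp

lemma tensorVec_apply_of_fin_one (X : (Fin n → Fin d) → ℂ) (Y : (Fin 1 → Fin d) → ℂ)
    (w : Fin (n + 1) → Fin d) :
    tensorVec X Y w = X (Fin.init w) * Y (fun _ => w (Fin.last n)) := by
  have : (fun j : Fin 1 => w (Fin.natAdd n j)) = fun _ => w (Fin.last n) := by
    funext j
    rw [Fin.fin_one_eq_zero j]
    rfl
  rw [tensorVec, this]
  rfl

lemma zero_tensorVec {m : ℕ} (Y : (Fin m → Fin d) → ℂ) :
    tensorVec (0 : (Fin n → Fin d) → ℂ) Y = 0 :=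
  funext fun _ => zero_mul _

lemma tensorOne_mulVec_tensorVec (A : Matrix (Fin n → Fin d) (Fin n → Fin d) ℂ)
    (X : (Fin n → Fin d) → ℂ) (Y : (Fin 1 → Fin d) → ℂ) :
    tensorOne d n A *ᵥ tensorVec X Y = tensorVec (A *ᵥ X) Y := by
  funext w
  simp only [mulVec, dotProduct, tensorVec_apply_of_fin_one, tensorOne]
  rw [← (Fin.snocEquiv fun _ => Fin d).sum_comp, Fintype.sum_prod_type,
    Finset.sum_eq_single (w (Fin.last n))]
  · simp [Fin.snocEquiv, Finset.sum_mul, mul_assoc]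
    rfl
  · intro b _ hb
    simp [Ne.symm hb]
  · simp

lemma Ti_apply_of_lt {m i : ℕ} (h : 1 ≤ i ∧ i < m) (w w' : Fin m → Fin d) :
    Ti d m T i w w' =
      T (w ⟨i - 1, by omega⟩, w ⟨i, h.2⟩) (w' ⟨i - 1, by omega⟩, w' ⟨i, h.2⟩) *
        ∏ j : Fin m,
          if (j : ℕ) = i - 1 ∨ (j : ℕ) = i then 1 else if w j = w' j then 1 else 0 :=
  congrFun (congrFun (dif_pos h : Ti d m T i = _) w) w'

lemma oneTensor_Ti {i : ℕ} (h1 : 1 ≤ i) (h2 : i < n) :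
    oneTensor d n (Ti d n T i) = Ti d (n + 1) T (i + 1) := by
  ext w w'
  rw [oneTensor, Ti_apply_of_lt T ⟨h1, h2⟩, Ti_apply_of_lt T (by omega), Fin.prod_univ_succ]
  simp only [Fin.val_succ, Fin.val_zero, Nat.add_sub_cancel, Nat.add_right_cancel_iff]
  have hsucc : (⟨i - 1, by omega⟩ : Fin n).succ = ⟨i, by omega⟩ := Fin.ext (by simp; omega)
  rw [hsucc, if_neg (show ¬(0 = i ∨ 0 = i + 1) by omega), mul_left_comm]
  congr 2
  exact Finset.prod_congr rfl fun j _ => if_congr (by omega) rfl rfl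

lemma tensorOne_Ti {i : ℕ} (h1 : 1 ≤ i) (h2 : i < n) :
    tensorOne d n (Ti d n T i) = Ti d (n + 1) T i := by
  ext w w'
  rw [tensorOne, Ti_apply_of_lt T ⟨h1, h2⟩, Ti_apply_of_lt T (by omega), Fin.prod_univ_castSucc]
  simp only [Fin.val_castSucc, Fin.val_last]
  rw [if_neg (show ¬(n = i - 1 ∨ n = i) by omega), mul_assoc]
  rfl

def consConsEquiv (d n : ℕ) : (Fin (n + 2) → Fin d) ≃ (Fin d × Fin d) × (Fin n → Fin d) :=
  (Fin.consEquiv _).symm.trans <|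
    ((Equiv.refl (Fin d)).prodCongr (Fin.consEquiv _).symm).trans (Equiv.prodAssoc _ _ _).symm

lemma Ti_one_eq_submatrix :
    Ti d (n + 2) T 1 = (T ⊗ₖ (1 : Matrix (Fin n → Fin d) (Fin n → Fin d) ℂ)).submatrix
      (consConsEquiv d n) (consConsEquiv d n) := by
  ext w w'
  rw [Ti_apply_of_lt T (by omega), Fin.prod_univ_succ, Fin.prod_univ_succ]
  simp [consConsEquiv, one_apply, Fin.val_succ, Finset.prod_boole, funext_iff, Fin.tail]

lemma oneTensor_oneTensor_eq_submatrix (A : Matrix (Fin n → Fin d) (Fin n → Fin d) ℂ) :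
    oneTensor d (n + 1) (oneTensor d n A) =
      ((1 : Matrix (Fin d × Fin d) (Fin d × Fin d) ℂ) ⊗ₖ A).submatrix
        (consConsEquiv d n) (consConsEquiv d n) := by
  ext w w'
  simp only [oneTensor, consConsEquiv, Equiv.trans_apply, Equiv.prodCongr_apply,
    Equiv.prodAssoc_symm_apply, Fin.consEquiv_symm_apply, Equiv.refl_apply, Prod.map_apply,
    submatrix_apply, kronecker_apply, one_apply, Prod.mk.injEq]
  rw [← mul_assoc, ite_zero_mul_ite_zero, one_mul]
  rfl

lemma Ti_one_commute_oneTensor_oneTensor (A : Matrix (Fin n → Fin d) (Fin n → Fin d) ℂ) :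
    Commute (Ti d (n + 2) T 1) (oneTensor d (n + 1) (oneTensor d n A)) := by
  rw [Ti_one_eq_submatrix, oneTensor_oneTensor_eq_submatrix, Commute, SemiconjBy,
    submatrix_mul_equiv, submatrix_mul_equiv, ← mul_kronecker_mul, ← mul_kronecker_mul,
    mul_one, one_mul, mul_one, one_mul]

lemma Ti_braid (hb : Braided d T) {m i : ℕ} (h1 : 1 ≤ i) (h2 : i + 1 < m) :
    Ti d m T i * Ti d m T (i + 1) * Ti d m T i =
      Ti d m T (i + 1) * Ti d m T i * Ti d m T (i + 1) := by
  induction m generalizing i with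
  | zero => omega
  | succ m ih =>
    obtain hlt | rfl := Nat.lt_or_eq_of_le (Nat.le_of_lt_succ h2)
    · rw [← tensorOne_Ti T h1 (by omega), ← tensorOne_Ti T (by omega) hlt,
        ← tensorOne_mul, ← tensorOne_mul, ← tensorOne_mul, ← tensorOne_mul, ih h1 hlt]
    · obtain rfl | hi := eq_or_lt_of_le h1
      · exact hb
      · obtain ⟨i, rfl⟩ : ∃ k, i = k + 1 := ⟨i - 1, by omega⟩
        rw [← oneTensor_Ti T (by omega) (by omega), ← oneTensor_Ti T (by omega) (by omega),
          ← oneTensor_mul, ← oneTensor_mul, ← oneTensor_mul, ← oneTensor_mul,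
          ih (by omega) (by omega)]

lemma Ti_commute_of_add_two_le {m i j : ℕ} (h1 : 1 ≤ i) (hij : i + 2 ≤ j) (hj : j < m) :
    Commute (Ti d m T i) (Ti d m T j) := by
  induction i generalizing m j with
  | zero => omega
  | succ i ih =>
    obtain ⟨m, rfl⟩ : ∃ k, m = k + 1 := ⟨m - 1, by omega⟩
    obtain ⟨j, rfl⟩ : ∃ k, j = k + 1 := ⟨j - 1, by omega⟩
    obtain rfl | hi := Nat.eq_zero_or_pos i
    · obtain ⟨m, rfl⟩ : ∃ k, m = k + 1 := ⟨m - 1, by omega⟩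
      obtain ⟨j, rfl⟩ : ∃ k, j = k + 1 := ⟨j - 1, by omega⟩
      rw [← oneTensor_Ti T (i := j + 1) (by omega) (by omega),
        ← oneTensor_Ti T (i := j) (by omega) (by omega)]
      exact Ti_one_commute_oneTensor_oneTensor T _
    · rw [← oneTensor_Ti T hi (by omega), ← oneTensor_Ti T (by omega) (by omega)]
      exact commute_oneTensor (ih hi (by omega) (by omega))

lemma prodT_zero : prodT d n T 0 = 1 := rfl

lemma prodT_succ (k : ℕ) : prodT d n T (k + 1) = prodT d n T k * Ti d n T (k + 1) := by
  rw [prodT, prodT, List.range_succ, List.map_append, List.prod_append]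
  simp

lemma Ti_commute_prodT {m j k : ℕ} (hk : k + 2 ≤ j) (hj : j < m) :
    Commute (Ti d m T j) (prodT d m T k) := by
  refine Commute.list_prod_right _ _ fun A hA => ?_
  obtain ⟨i, hi, rfl⟩ := List.mem_map.mp hA
  exact (Ti_commute_of_add_two_le T (by omega) (by simp at hi; omega) hj).symm

lemma Ti_succ_mul_prodT (hb : Braided d T) {m i k : ℕ} (h1 : 1 ≤ i) (hik : i + 1 ≤ k)
    (hk : k < m) : Ti d m T (i + 1) * prodT d m T k = prodT d m T k * Ti d m T i := by
  induction k with
  | zero => omega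
  | succ k ih =>
    obtain hlt | heq := Nat.lt_or_eq_of_le hik
    · rw [prodT_succ, ← mul_assoc, ih (by omega) (by omega), mul_assoc, mul_assoc,
        (Ti_commute_of_add_two_le T h1 (by omega) hk).eq]
    · obtain rfl : i = k := by omega
      obtain ⟨l, rfl⟩ : ∃ l, i = l + 1 := ⟨i - 1, by omega⟩
      have hbraid := Ti_braid T hb h1 hk
      rw [prodT_succ, prodT_succ, ← mul_assoc, ← mul_assoc,
        (Ti_commute_prodT T le_rfl hk).eq]
      simp only [mul_assoc] at hbraid ⊢
      rw [hbraid]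

lemma prodT_succ_eq_Ti_one_mul {k : ℕ} (hk : k < n) :
    prodT d (n + 1) T (k + 1) = Ti d (n + 1) T 1 * oneTensor d n (prodT d n T k) := by
  induction k with
  | zero => rw [prodT_succ, prodT_zero, prodT_zero, oneTensor_one, one_mul, mul_one]
  | succ k ih =>
    rw [prodT_succ, ih (by omega), prodT_succ, oneTensor_mul, oneTensor_Ti T (by omega) hk,
      mul_assoc]

lemma tensorOne_prodT {k : ℕ} (hk : k < n) :
    tensorOne d n (prodT d n T k) = prodT d (n + 1) T k := by
  induction k with
  | zero => exact tensorOne_one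
  | succ k ih =>
    rw [prodT_succ, tensorOne_mul, ih (by omega), tensorOne_Ti T (by omega) hk, ← prodT_succ]

lemma oneTensor_prodT_mul_prodT (hb : Braided d T) {k : ℕ} (hk : k < n) :
    oneTensor d n (prodT d n T k) * prodT d (n + 1) T n =
      prodT d (n + 1) T n * tensorOne d n (prodT d n T k) := by
  induction k with
  | zero => rw [prodT_zero, oneTensor_one, tensorOne_one, one_mul, mul_one]
  | succ k ih =>
    rw [prodT_succ, oneTensor_mul, tensorOne_mul, oneTensor_Ti T (by omega) hk, mul_assoc,
      Ti_succ_mul_prodT T hb (by omega) (by omega) (by omega), ← mul_assoc, ih (by omega),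
      tensorOne_Ti T (by omega) hk, mul_assoc]

lemma oneTensor_Rmat_mul_prodT (hb : Braided d T) :
    oneTensor d n (Rmat d n T) * prodT d (n + 1) T n =
      prodT d (n + 1) T n * tensorOne d n (Rmat d n T) := by
  rw [Rmat, oneTensor_sum, tensorOne_sum, Finset.sum_mul, Finset.mul_sum]
  exact Finset.sum_congr rfl fun k hk =>
    oneTensor_prodT_mul_prodT T hb (Finset.mem_range.mp hk)

lemma oneTensor_Pmat_mul_prodT (hb : Braided d T) (n : ℕ) :
    oneTensor d n (Pmat d T n) * prodT d (n + 1) T n =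
      prodT d (n + 1) T n * tensorOne d n (Pmat d T n) := by
  induction n with
  | zero => rw [Pmat, oneTensor_one, tensorOne_one, one_mul, mul_one]
  | succ n ih =>
    have hcomm : oneTensor d (n + 1) (oneTensor d n (Pmat d T n)) * prodT d (n + 2) T (n + 1) =
        prodT d (n + 2) T (n + 1) * tensorOne d (n + 1) (oneTensor d n (Pmat d T n)) := by
      rw [prodT_succ_eq_Ti_one_mul T (by omega), ← mul_assoc,
        ← (Ti_one_commute_oneTensor_oneTensor T _).eq, mul_assoc, ← oneTensor_mul, ih,
        oneTensor_mul, oneTensor_tensorOne, mul_assoc]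
    rw [Pmat, oneTensor_mul, tensorOne_mul, mul_assoc, oneTensor_Rmat_mul_prodT T hb,
      ← mul_assoc, hcomm, mul_assoc]

theorem ann_ker_general (d n : ℕ) (T : Matrix (Fin d × Fin d) (Fin d × Fin d) ℂ)
    (hbraid : Braided d T)
    (X : (Fin (n + 1) → Fin d) → ℂ) (hX : (Pmat d T (n + 1)).mulVec X = 0) (i : Fin d) :
    (Pmat d T n).mulVec (ann i ((Rmat d (n + 1) T).mulVec X)) = 0 ∧
      ∀ k : Fin d,
        (Pmat d T (n + 1)).mulVec
            (ann i ((prodT d (n + 2) T (n + 1)).mulVec (tensorVec (d := d) (n := n + 1) (m := 1) X (basisVec k)))) = 0 := by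
  refine ⟨?_, fun k => ?_⟩
  · rw [← ann_oneTensor_mulVec, mulVec_mulVec, ← Pmat, hX]
    rfl
  · rw [← ann_oneTensor_mulVec, mulVec_mulVec, oneTensor_Pmat_mul_prodT T hbraid,
      ← mulVec_mulVec, tensorOne_mulVec_tensorVec, hX, zero_tensorVec, mulVec_zero]
    rfl

/-- Let `T` be a braided self-adjoint contraction on `H ⊗ H` (`H` finite-dimensional).
If `X ∈ ker P_n` (here `n ≥ 2` is written as `n + 1`), then for every `i` the element
`e_i* ⊗ X`, rewritten via the Wick relations, lies in `ker P_{n-1} + ker P_n ⊗ H*`;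
concretely, `μ(e_i*) R_n X ∈ ker P_{n-1}` and `μ(e_i*) T_1 T_2 ⋯ T_n (X ⊗ e_k) ∈ ker P_n`
for each `k`, where `μ(e_i*)` is the annihilation operator. -/
theorem ann_ker (d n : ℕ) (hn : 1 ≤ n) (T : Matrix (Fin d × Fin d) (Fin d × Fin d) ℂ)
    (hsa : T.IsHermitian) (hcontr : ‖Matrix.toEuclideanCLM (𝕜 := ℂ) T‖ ≤ 1)
    (hbraid : Braided d T)
    (X : (Fin (n + 1) → Fin d) → ℂ) (hX : (Pmat d T (n + 1)).mulVec X = 0) (i : Fin d) :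
    (Pmat d T n).mulVec (ann i ((Rmat d (n + 1) T).mulVec X)) = 0 ∧
      ∀ k : Fin d,
        (Pmat d T (n + 1)).mulVec
            (ann i ((prodT d (n + 2) T (n + 1)).mulVec (tensorVec (d := d) (n := n + 1) (m := 1) X (basisVec k)))) = 0 :=
  ann_ker_general d n T hbraid X hX i

end Wick
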